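/- Let γₙ : [0,1] → ℂ be continuous curves converging uniformly to γ : [0,1] → ℂ, σₙ → σ in [0,1], and ℓ ⊆ ℂ closed with γ(σ) ∉ ℓ. Define λ = inf{t ≥ σ : γ(t) ∈ ℓ} and λₙ = inf{t ≥ σₙ : γₙ(t) ∈ ℓ}. Then liminf_{n→∞} λₙ ≥ λ. -/

import Mathlib

/-!
Fix `b < λ`. Near `σ` the curve `γ` avoids `ℓ` by continuity, and on `[σ, b]` by the definition
of `λ`, so `γ` avoids `ℓ` on a compact interval `[σ - δ, b] ∩ [0, 1]`. The image of that interval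
is compact and disjoint from the closed set `ℓ`, hence at positive distance from it, so the
uniformly close curves `γₙ` avoid `ℓ` there too for large `n`. Since eventually `σₙ > σ - δ`,
this gives `b ≤ λₙ` for large `n`.
-/

open Set Filter

theorem TendstoUniformlyOn.eventually_forall_notMem {α X ι : Type*} [TopologicalSpace α]
    [PseudoMetricSpace X] {F : ι → α → X} {f : α → X} {p : Filter ι} {K : Set α} {ℓ : Set X}
    (hF : TendstoUniformlyOn F f p K) (hK : IsCompact K) (hf : ContinuousOn f K)
    (hℓ : IsClosed ℓ) (hfK : ∀ t ∈ K, f t ∉ ℓ) : ∀ᶠ n in p, ∀ t ∈ K, F n t ∉ ℓ := by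
  obtain ⟨δ, hδ, hthick⟩ := (hK.image_of_continuousOn hf).exists_thickening_subset_open
    hℓ.isOpen_compl (image_subset_iff.2 hfK)
  filter_upwards [Metric.tendstoUniformlyOn_iff.1 hF δ hδ] with n hn t ht
  exact hthick (Metric.mem_thickening_iff.2
    ⟨f t, mem_image_of_mem f ht, by rw [dist_comm]; exact hn t ht⟩)

section HittingTime

variable {X : Type*} (γ : ℝ → X) (ℓ : Set X) (s : ℝ)

noncomputable def hittingTimeAfter : ℝ :=
  sInf (insert 1 {t | t ∈ Icc s 1 ∧ γ t ∈ ℓ})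

theorem bddBelow_hittingTimeAfter_set : BddBelow (insert 1 {t | t ∈ Icc s 1 ∧ γ t ∈ ℓ}) :=
  ⟨min s 1, by
    rintro t (rfl | ⟨ht, -⟩)
    exacts [min_le_right _ _, (min_le_left _ _).trans ht.1]⟩

theorem hittingTimeAfter_le_one : hittingTimeAfter γ ℓ s ≤ 1 :=
  csInf_le (bddBelow_hittingTimeAfter_set γ ℓ s) (mem_insert _ _)

variable {γ ℓ s}

theorem notMem_of_lt_hittingTimeAfter {t : ℝ} (ht : t ∈ Icc s 1)
    (hlt : t < hittingTimeAfter γ ℓ s) : γ t ∉ ℓ := fun htℓ =>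
  hlt.not_ge (csInf_le (bddBelow_hittingTimeAfter_set γ ℓ s) (Or.inr ⟨ht, htℓ⟩))

theorem le_hittingTimeAfter {b : ℝ} (hb : b ≤ 1) (h : ∀ t ∈ Icc s 1, γ t ∈ ℓ → b ≤ t) :
    b ≤ hittingTimeAfter γ ℓ s :=
  le_csInf (insert_nonempty _ _) (by
    rintro t (rfl | ⟨ht, htℓ⟩)
    exacts [hb, h t ht htℓ])

end HittingTime

theorem eventually_le_hittingTimeAfter {X : Type*} [PseudoMetricSpace X] {γₙ : ℕ → ℝ → X}
    {γ : ℝ → X} (hcont : ContinuousOn γ (Icc 0 1))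
    (hunif : TendstoUniformlyOn γₙ γ atTop (Icc 0 1))
    {σₙ : ℕ → ℝ} {σ : ℝ} (hσₙ : ∀ n, σₙ n ∈ Icc (0 : ℝ) 1) (hσ : σ ∈ Icc (0 : ℝ) 1)
    (hσconv : Tendsto σₙ atTop (nhds σ)) {ℓ : Set X} (hℓ : IsClosed ℓ) (hnot : γ σ ∉ ℓ)
    {b : ℝ} (hb : b < hittingTimeAfter γ ℓ σ) :
    ∀ᶠ n in atTop, b ≤ hittingTimeAfter (γₙ n) ℓ (σₙ n) := by
  obtain ⟨δ, hδ, hball⟩ := Metric.mem_nhdsWithin_iff.1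
    ((hcont σ hσ).preimage_mem_nhdsWithin (hℓ.isOpen_compl.mem_nhds hnot))
  set K := Icc 0 1 ∩ Icc (σ - δ / 2) b
  have hγK : ∀ t ∈ K, γ t ∉ ℓ := by
    rintro t ⟨ht01, htσ, htb⟩
    rcases le_or_gt σ t with hσt | htσ'
    · exact notMem_of_lt_hittingTimeAfter ⟨hσt, ht01.2⟩ (htb.trans_lt hb)
    · refine hball ⟨?_, ht01⟩
      rw [Metric.mem_ball, Real.dist_eq, abs_lt]
      constructor <;> linarith
  have hγₙK := (hunif.mono inter_subset_left).eventually_forall_notMem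
    (isCompact_Icc.inter isCompact_Icc) (hcont.mono inter_subset_left) hℓ hγK
  filter_upwards [hγₙK, hσconv.eventually (eventually_gt_nhds (by linarith : σ - δ / 2 < σ))]
    with n hn hσn
  refine le_hittingTimeAfter (hb.le.trans (hittingTimeAfter_le_one _ _ _)) fun t ht htℓ => ?_
  by_contra! htb
  exact hn t ⟨⟨(hσₙ n).1.trans ht.1, ht.2⟩, hσn.le.trans ht.1, htb.le⟩ htℓ

theorem hitting_time_liminf_ge_general (γₙ : ℕ → ℝ → ℂ) (γ : ℝ → ℂ)
    (hcont : ContinuousOn γ (Set.Icc 0 1))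
    (hunif : TendstoUniformlyOn γₙ γ atTop (Set.Icc 0 1))
    (σₙ : ℕ → ℝ) (σ : ℝ) (hσₙ : ∀ n, σₙ n ∈ Set.Icc (0 : ℝ) 1) (hσ : σ ∈ Set.Icc (0 : ℝ) 1)
    (hσconv : Tendsto σₙ atTop (nhds σ))
    (ℓ : Set ℂ) (hℓ : IsClosed ℓ) (hnot : γ σ ∉ ℓ) :
    sInf (insert 1 {t | t ∈ Set.Icc σ 1 ∧ γ t ∈ ℓ}) ≤
      Filter.liminf (fun n => sInf (insert 1 {t | t ∈ Set.Icc (σₙ n) 1 ∧ γₙ n t ∈ ℓ}))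
        atTop := by
  change hittingTimeAfter γ ℓ σ ≤ liminf (fun n => hittingTimeAfter (γₙ n) ℓ (σₙ n)) atTop
  refine le_of_forall_lt_imp_le_of_dense fun b hb => le_liminf_of_le
    (isCoboundedUnder_ge_of_le _ fun n => hittingTimeAfter_le_one _ _ _) ?_
  exact eventually_le_hittingTimeAfter hcont hunif hσₙ hσ hσconv hℓ hnot hb

/-- Lower semicontinuity of hitting times: if continuous curves `γₙ` converge uniformly to `γ`,
`σₙ → σ`, and `ℓ` is closed with `γ(σ) ∉ ℓ`, then with hitting times defined with the
convention `inf ∅ = 1`, `liminf λₙ ≥ λ`. -/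
theorem hitting_time_liminf_ge (γₙ : ℕ → ℝ → ℂ) (γ : ℝ → ℂ)
    (hcontₙ : ∀ n, ContinuousOn (γₙ n) (Set.Icc 0 1)) (hcont : ContinuousOn γ (Set.Icc 0 1))
    (hunif : TendstoUniformlyOn γₙ γ atTop (Set.Icc 0 1))
    (σₙ : ℕ → ℝ) (σ : ℝ) (hσₙ : ∀ n, σₙ n ∈ Set.Icc (0 : ℝ) 1) (hσ : σ ∈ Set.Icc (0 : ℝ) 1)
    (hσconv : Tendsto σₙ atTop (nhds σ))
    (ℓ : Set ℂ) (hℓ : IsClosed ℓ) (hnot : γ σ ∉ ℓ) :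
    sInf (insert 1 {t | t ∈ Set.Icc σ 1 ∧ γ t ∈ ℓ}) ≤
      Filter.liminf (fun n => sInf (insert 1 {t | t ∈ Set.Icc (σₙ n) 1 ∧ γₙ n t ∈ ℓ}))
        atTop :=
  hitting_time_liminf_ge_general γₙ γ hcont hunif σₙ σ hσₙ hσ hσconv ℓ hℓ hnot
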